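/- arXiv:2306.04264 — 2 statements merged into one kernel-verified Lean document; each statement's English description precedes it below -/
import Mathlib

section
/- Let r^1,...,r^k ∈ Z^n be linearly independent with L = span{r^1,...,r^k}. Then the multiplicity of the projected cone satisfies Δ(r^1|(r^i)^⊥,...,r^{i−1}|(r^i)^⊥, r^{i+1}|(r^i)^⊥,...,r^k|(r^i)^⊥) ≤ Δ(r^1,...,r^k), where the left-hand side is defined with respect to the projected lattice (L ∩ Z^n)|(r^i)^⊥. -/
/-!
Let `P` be the projection onto `(rⁱ)^⊥`. A lattice point `y` of the projected parallelepiped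
is `P x` with `x = ∑ μⱼ rʲ ∈ L ∩ ℤⁿ`. The vectors `P rʲ` (`j ≠ i`) are linearly independent,
since `ker P = ℝ rⁱ` meets the span of the other `rʲ` trivially, so `μⱼ` is the parallelepiped
coordinate of `y` and lies in `[0, 1)` for `j ≠ i`. Replacing every `μⱼ` by its fractional part
subtracts an integer combination of the `rʲ`, giving a point of `par r` that `P` still maps to
`y`. Hence the projected parallelepiped lies in `P '' par r`, a finite set of size at most
`|par r|`.
-/

open scoped BigOperators

noncomputable section

namespace ICRPaper

/-- A real vector is integral if every coordinate is an integer. -/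
def IsIntegral {n : ℕ} (x : Fin n → ℝ) : Prop := ∀ i, ∃ z : ℤ, x i = (z : ℝ)

/-- The lattice of integer points of `ℝ^n`. -/
def intLattice (n : ℕ) : Set (Fin n → ℝ) := {x | IsIntegral x}

/-- Standard dot product on `ℝ^n`. -/
def dot {n : ℕ} (x y : Fin n → ℝ) : ℝ := ∑ i, x i * y i

/-- `pos r`: the cone of non-negative real combinations of the vectors `r i`. -/
def pos {n : ℕ} {ι : Type} [Fintype ι] (r : ι → (Fin n → ℝ)) : Set (Fin n → ℝ) :=
  {x | ∃ lam : ι → ℝ, (∀ i, 0 ≤ lam i) ∧ x = ∑ i, lam i • r i}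

/-- Lattice points (w.r.t. a lattice `Λ`) in the half-open parallelepiped spanned by `r`. -/
def parL {n : ℕ} {ι : Type} [Fintype ι] (Λ : Set (Fin n → ℝ)) (r : ι → (Fin n → ℝ)) :
    Set (Fin n → ℝ) :=
  {x | (∃ lam : ι → ℝ, (∀ i, 0 ≤ lam i ∧ lam i < 1) ∧ x = ∑ i, lam i • r i) ∧ x ∈ Λ}

/-- Integer points in the half-open parallelepiped spanned by `r`. -/
def par {n : ℕ} {ι : Type} [Fintype ι] (r : ι → (Fin n → ℝ)) : Set (Fin n → ℝ) :=
  parL (intLattice n) r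

/-- `h` is a Hilbert basis element of the cone `C` with respect to the lattice `Λ`:
a nonzero lattice vector of `C` which is not the sum of two nonzero lattice vectors of `C`. -/
def IsHilbertL {n : ℕ} (Λ : Set (Fin n → ℝ)) (C : Set (Fin n → ℝ)) (h : Fin n → ℝ) : Prop :=
  h ∈ C ∧ h ∈ Λ ∧ h ≠ 0 ∧
    ∀ a b : Fin n → ℝ, a ∈ C → b ∈ C → a ∈ Λ → b ∈ Λ → a ≠ 0 → b ≠ 0 → h ≠ a + b

/-- The integer Carathéodory rank of `C` with respect to the lattice `Λ`:
the maximum over lattice points `z ∈ C` of the minimal number of Hilbert basis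
elements needed to write `z` as a non-negative integral combination. -/
def ICRL {n : ℕ} (Λ : Set (Fin n → ℝ)) (C : Set (Fin n → ℝ)) : ℕ :=
  sSup {m : ℕ | ∃ z ∈ C, z ∈ Λ ∧
    m = sInf {k : ℕ | ∃ h : Fin k → (Fin n → ℝ), ∃ c : Fin k → ℕ,
      (∀ i, IsHilbertL Λ C (h i)) ∧ z = ∑ i, (c i : ℝ) • h i}}

/-- The integer Carathéodory rank with respect to the integer lattice `ℤ^n`. -/
def ICR {n : ℕ} (C : Set (Fin n → ℝ)) : ℕ := ICRL (intLattice n) C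

/-- The lattice `L ∩ ℤ^n`, where `L` is the real span of the vectors `r i`. -/
def latticeOf {n : ℕ} {ι : Type} [Fintype ι] (r : ι → (Fin n → ℝ)) : Set (Fin n → ℝ) :=
  {x | x ∈ Submodule.span ℝ (Set.range r) ∧ IsIntegral x}

/-- The dual lattice `Λ* = {x ∈ lin Λ : ⟨y, x⟩ ∈ ℤ for all y ∈ Λ}`. -/
def dualLattice {n : ℕ} (Λ : Set (Fin n → ℝ)) : Set (Fin n → ℝ) :=
  {x | x ∈ Submodule.span ℝ Λ ∧ ∀ y ∈ Λ, ∃ m : ℤ, dot y x = (m : ℝ)}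

/-- Orthogonal projection onto the orthogonal complement of `v`. -/
def projPerp {n : ℕ} (v : Fin n → ℝ) (x : Fin n → ℝ) : Fin n → ℝ :=
  x - (dot x v / dot v v) • v

lemma dot_eq_dotProduct {n : ℕ} (x y : Fin n → ℝ) : dot x y = x ⬝ᵥ y := rfl

lemma isIntegral_iff_mem_span_int {n : ℕ} (x : Fin n → ℝ) :
    IsIntegral x ↔ x ∈ Submodule.span ℤ (Set.range (Pi.basisFun ℝ (Fin n))) := by
  rw [Module.Basis.mem_span_iff_repr_mem]
  simp [IsIntegral, eq_comm]

section Projection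

variable {n : ℕ}

def projPerpₗ (v : Fin n → ℝ) : (Fin n → ℝ) →ₗ[ℝ] Fin n → ℝ where
  toFun := projPerp v
  map_add' x y := by
    simp only [projPerp, dot_eq_dotProduct, add_dotProduct, add_div, add_smul]
    abel
  map_smul' c x := by
    simp only [projPerp, dot_eq_dotProduct, smul_dotProduct, smul_eq_mul, mul_div_assoc,
      RingHom.id_apply, smul_sub, smul_smul]

@[simp]
lemma projPerpₗ_apply (v x : Fin n → ℝ) : projPerpₗ v x = projPerp v x := rfl

lemma projPerp_self {v : Fin n → ℝ} (hv : v ≠ 0) : projPerp v v = 0 := by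
  have hvv : dot v v ≠ 0 := by rwa [dot_eq_dotProduct, Ne, dotProduct_self_eq_zero]
  simp [projPerp, div_self hvv]

lemma ker_projPerpₗ_le (v : Fin n → ℝ) :
    LinearMap.ker (projPerpₗ v) ≤ Submodule.span ℝ {v} := fun _ hx =>
  Submodule.mem_span_singleton.2 ⟨_, (sub_eq_zero.1 hx).symm⟩

variable {k : ℕ} {r : Fin k → Fin n → ℝ}

lemma linearIndependent_projPerp (hli : LinearIndependent ℝ r) (i : Fin k) :
    LinearIndependent ℝ (fun j : {j : Fin k // j ≠ i} => projPerp (r i) (r j)) := by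
  have hdisj : Disjoint (Submodule.span ℝ (Set.range (r ∘ Subtype.val : {j // j ≠ i} → _)))
      (LinearMap.ker (projPerpₗ (r i))) := by
    rw [Set.range_comp, Subtype.range_coe_subtype]
    refine (hli.disjoint_span_image (t := {i}) ?_).mono_right ?_
    · exact Set.disjoint_singleton_right.2 fun h => h rfl
    · rw [Set.image_singleton]
      exact ker_projPerpₗ_le _
  exact (hli.comp _ Subtype.val_injective).map hdisj

lemma projPerp_sum_smul {i : Fin k} (hri : r i ≠ 0) (c : Fin k → ℝ) :
    projPerp (r i) (∑ j, c j • r j) = ∑ j : {j : Fin k // j ≠ i}, c j • projPerp (r i) (r j) := by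
  rw [← projPerpₗ_apply, map_sum]
  simp only [map_smul, projPerpₗ_apply]
  rw [Fintype.sum_eq_add_sum_subtype_ne _ i, projPerp_self hri, smul_zero, zero_add]

end Projection

section Parallelepiped

variable {n : ℕ} {ι : Type} [Fintype ι]

lemma par_subset_parallelepiped_inter_span_int (r : ι → Fin n → ℝ) :
    par r ⊆ parallelepiped r ∩ Submodule.span ℤ (Set.range (Pi.basisFun ℝ (Fin n))) := by
  rintro x ⟨⟨lam, hlam, rfl⟩, hx⟩
  refine ⟨(mem_parallelepiped_iff _ _).2 ⟨lam, ⟨fun j => (hlam j).1, fun j => (hlam j).2.le⟩, rfl⟩,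
    (isIntegral_iff_mem_span_int _).1 hx⟩

lemma par_finite (r : ι → Fin n → ℝ) : (par r).Finite :=
  (ZSpan.setFinite_inter (Pi.basisFun ℝ (Fin n))
    (isCompact_Icc.image (by fun_prop) : IsCompact (parallelepiped r)).isBounded).subset
    (par_subset_parallelepiped_inter_span_int r)

lemma sum_fract_smul_mem_par {r : ι → Fin n → ℝ} (hint : ∀ j, IsIntegral (r j)) {μ : ι → ℝ}
    (hx : IsIntegral (∑ j, μ j • r j)) : ∑ j, Int.fract (μ j) • r j ∈ par r := by
  refine ⟨⟨fun j => Int.fract (μ j), fun j => ⟨Int.fract_nonneg _, Int.fract_lt_one _⟩, rfl⟩, ?_⟩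
  have hsub : ∑ j, Int.fract (μ j) • r j = ∑ j, μ j • r j - ∑ j, ⌊μ j⌋ • r j := by
    simp only [← Int.self_sub_floor, sub_smul, Finset.sum_sub_distrib, Int.cast_smul_eq_zsmul]
  change IsIntegral _
  rw [hsub]
  rw [isIntegral_iff_mem_span_int] at hx ⊢
  exact sub_mem hx (Submodule.sum_mem _ fun j _ =>
    Submodule.smul_mem _ _ ((isIntegral_iff_mem_span_int _).1 (hint j)))

end Parallelepiped

lemma parL_projPerp_subset_image_par {n k : ℕ} {r : Fin k → Fin n → ℝ}
    (hint : ∀ j, IsIntegral (r j)) (hli : LinearIndependent ℝ r) (i : Fin k) :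
    parL (projPerp (r i) '' latticeOf r)
        (fun j : {j : Fin k // j ≠ i} => projPerp (r i) (r j)) ⊆ projPerp (r i) '' par r := by
  rintro y ⟨⟨lam, hlam, rfl⟩, x, ⟨hxL, hxint⟩, hxy⟩
  obtain ⟨μ, rfl⟩ := (Submodule.mem_span_range_iff_exists_fun ℝ).1 hxL
  have hri := hli.ne_zero i
  have hμ : ∀ j : {j : Fin k // j ≠ i}, μ j = lam j :=
    Fintype.linearIndependent_iffₛ.1 (linearIndependent_projPerp hli i) _ _
      ((projPerp_sum_smul hri μ).symm.trans hxy)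
  refine ⟨_, sum_fract_smul_mem_par hint hxint, ?_⟩
  rw [projPerp_sum_smul hri]
  exact Finset.sum_congr rfl fun j _ => by rw [hμ j, Int.fract_eq_self.2 (hlam j)]

/-- the multiplicity (number of lattice points in the half-open
parallelepiped) of the projected cone, with respect to the projected lattice,
is at most the multiplicity of the original cone. -/
theorem stmt_9 {n k : ℕ} (r : Fin k → (Fin n → ℝ))
    (hint : ∀ i, IsIntegral (r i)) (hli : LinearIndependent ℝ r) (i : Fin k) :
    (parL (projPerp (r i) '' latticeOf r)
        (fun j : {j : Fin k // j ≠ i} => projPerp (r i) (r (j : Fin k)))).ncard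
      ≤ (par r).ncard :=
  calc _ ≤ (projPerp (r i) '' par r).ncard :=
        Set.ncard_le_ncard (parL_projPerp_subset_image_par hint hli i) ((par_finite r).image _)
    _ ≤ (par r).ncard := Set.ncard_image_le (par_finite r)

end ICRPaper
end
end

section
/- Let r^1,...,r^k ∈ Z^n be linearly independent with L = span{r^1,...,r^k}, and suppose (r^s)* − (r^t)* ∈ (L ∩ Z^n)* for some s ≠ t, with s, t ≠ i. Then (r^s|(r^i)^⊥)* − (r^t|(r^i)^⊥)* ∈ ((L ∩ Z^n)|(r^i)^⊥)*, where the dual bases on the left are taken among the projected generators r^j|(r^i)^⊥ (j ≠ i) inside the projected span. -/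
open scoped BigOperators

noncomputable section

namespace ICRPaper

section Aux

variable {n : ℕ}

lemma dot_comm' (x y : Fin n → ℝ) : dot x y = dot y x := by
  simp [dot, mul_comm]

lemma dot_add_left (x y z : Fin n → ℝ) : dot (x + y) z = dot x z + dot y z := by
  simp [dot, add_mul, Finset.sum_add_distrib]

lemma dot_sub_left (x y z : Fin n → ℝ) : dot (x - y) z = dot x z - dot y z := by
  simp [dot, sub_mul, Finset.sum_sub_distrib]

lemma dot_sub_right (x y z : Fin n → ℝ) : dot x (y - z) = dot x y - dot x z := by
  simp [dot, mul_sub, Finset.sum_sub_distrib]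

lemma dot_smul_left (c : ℝ) (x y : Fin n → ℝ) : dot (c • x) y = c * dot x y := by
  simp [dot, Finset.mul_sum, mul_assoc]

lemma dot_zero_left (y : Fin n → ℝ) : dot 0 y = 0 := by simp [dot]

lemma dot_self_eq_zero {x : Fin n → ℝ} (h : dot x x = 0) : x = 0 := by
  funext j
  have h' := (Finset.sum_eq_zero_iff_of_nonneg
    (fun i _ => mul_self_nonneg (x i))).mp h j (Finset.mem_univ j)
  simpa [mul_self_eq_zero] using h'

/-- `projPerp v` as a linear map. -/
def projPerpL (v : Fin n → ℝ) : (Fin n → ℝ) →ₗ[ℝ] (Fin n → ℝ) where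
  toFun := projPerp v
  map_add' x y := by
    unfold projPerp
    rw [dot_add_left, add_div, add_smul]
    abel
  map_smul' c x := by
    show projPerp v (c • x) = c • projPerp v x
    unfold projPerp
    rw [dot_smul_left, mul_div_assoc, smul_sub, smul_smul]

lemma projPerpL_apply (v x : Fin n → ℝ) : projPerpL v x = projPerp v x := rfl

lemma dot_projPerp_left (v x y : Fin n → ℝ) (hvy : dot v y = 0) :
    dot (projPerp v x) y = dot x y := by
  unfold projPerp
  rw [dot_sub_left, dot_smul_left, hvy, mul_zero, sub_zero]

end Aux

/-- if `(r^s)* − (r^t)* ∈ (L ∩ ℤ^n)*` with `s, t ≠ i`, then the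
corresponding difference of dual basis vectors of the projected generators lies in
the dual of the projected lattice `(L ∩ ℤ^n)|(r^i)^⊥`. -/
theorem stmt_10 {n k : ℕ} (r : Fin k → (Fin n → ℝ))
    (hint : ∀ i, IsIntegral (r i)) (hli : LinearIndependent ℝ r)
    (i s t : Fin k) (hsi : s ≠ i) (hti : t ≠ i) (hst : s ≠ t)
    (rstar : Fin k → (Fin n → ℝ))
    (hspan : ∀ j, rstar j ∈ Submodule.span ℝ (Set.range r))
    (hdual : ∀ l j, dot (r l) (rstar j) = if l = j then 1 else 0)
    (hmem : rstar s - rstar t ∈ dualLattice (latticeOf r))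
    (sstar : {j : Fin k // j ≠ i} → (Fin n → ℝ))
    (hspan2 : ∀ j, sstar j ∈ Submodule.span ℝ
      (Set.range fun j : {j : Fin k // j ≠ i} => projPerp (r i) (r (j : Fin k))))
    (hdual2 : ∀ l j : {j : Fin k // j ≠ i},
      dot (projPerp (r i) (r (l : Fin k))) (sstar j) = if l = j then 1 else 0) :
    sstar ⟨s, hsi⟩ - sstar ⟨t, hti⟩ ∈ dualLattice (projPerp (r i) '' latticeOf r) := by
  classical
  set v := r i with hv
  set w := rstar s - rstar t with hw
  -- `r i ≠ 0`, hence `dot v v ≠ 0`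
  have hri0 : r i ≠ 0 := hli.ne_zero i
  have hvv : dot v v ≠ 0 := by
    intro h
    exact hri0 (dot_self_eq_zero h)
  have hPri : projPerp v (r i) = 0 := by
    unfold projPerp
    rw [← hv, div_self hvv, one_smul, sub_self]
  -- `w` is orthogonal to `v`
  have hriw : dot v w = 0 := by
    rw [hw, hv, dot_sub_right, hdual i s, hdual i t]
    simp [Ne.symm hsi, Ne.symm hti]
  have hwv : dot w v = 0 := by rw [dot_comm']; exact hriw
  have hPw : projPerp v w = w := by
    unfold projPerp
    rw [hwv, zero_div, zero_smul, sub_zero]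
  -- `w` lies in the span of the projected generators
  have hwspanr : w ∈ Submodule.span ℝ (Set.range r) :=
    Submodule.sub_mem _ (hspan s) (hspan t)
  set S : Set (Fin n → ℝ) :=
    (Set.range fun j : {j : Fin k // j ≠ i} => projPerp (r i) (r (j : Fin k))) with hS
  have hwS : w ∈ Submodule.span ℝ S := by
    have h1 : projPerpL v w ∈ Submodule.map (projPerpL v) (Submodule.span ℝ (Set.range r)) :=
      Submodule.mem_map_of_mem hwspanr
    rw [Submodule.map_span] at h1
    have h2 : (projPerpL v '' Set.range r) ⊆ (Submodule.span ℝ S : Set (Fin n → ℝ)) := by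
      rintro _ ⟨_, ⟨j, rfl⟩, rfl⟩
      by_cases hj : j = i
      · subst hj
        rw [projPerpL_apply, hPri]
        exact Submodule.zero_mem _
      · exact Submodule.subset_span ⟨⟨j, hj⟩, rfl⟩
    have h3 := Submodule.span_le.mpr h2
    have h4 : projPerpL v w ∈ Submodule.span ℝ S := h3 h1
    rwa [projPerpL_apply, hPw] at h4
  -- the difference `d` is orthogonal to all projected generators and is in their span
  set u : Fin n → ℝ := sstar ⟨s, hsi⟩ - sstar ⟨t, hti⟩ with hu
  set d : Fin n → ℝ := u - w with hd
  have hdS : d ∈ Submodule.span ℝ S :=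
    Submodule.sub_mem _ (Submodule.sub_mem _ (hspan2 _) (hspan2 _)) hwS
  have hortho : ∀ j : {j : Fin k // j ≠ i}, dot (projPerp v (r (j : Fin k))) d = 0 := by
    intro j
    have h1 : dot (projPerp v (r (j : Fin k))) u =
        (if j = ⟨s, hsi⟩ then (1:ℝ) else 0) - (if j = ⟨t, hti⟩ then 1 else 0) := by
      rw [hu, dot_sub_right, hdual2 j ⟨s, hsi⟩, hdual2 j ⟨t, hti⟩]
    have h2 : dot (projPerp v (r (j : Fin k))) w =
        (if (j : Fin k) = s then (1:ℝ) else 0) - (if (j : Fin k) = t then 1 else 0) := by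
      rw [dot_projPerp_left v _ w hriw, hw, dot_sub_right, hdual, hdual]
    rw [hd, dot_sub_right, h1, h2]
    simp [Subtype.ext_iff]
  have hspanortho : ∀ x ∈ Submodule.span ℝ S, dot x d = 0 := by
    intro x hx
    refine Submodule.span_induction ?_ ?_ ?_ ?_ hx
    · rintro _ ⟨j, rfl⟩; exact hortho j
    · exact dot_zero_left d
    · intro a b _ _ ha hb; rw [dot_add_left, ha, hb, add_zero]
    · intro c a _ ha; rw [dot_smul_left, ha, mul_zero]
  have hd0 : d = 0 := dot_self_eq_zero (hspanortho d hdS)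
  have huw : u = w := by
    have := sub_eq_zero.mp hd0
    exact this
  -- conclude
  rw [huw]
  constructor
  · -- membership in the span of the projected lattice
    have hrange : Set.range r ⊆ latticeOf r := by
      rintro _ ⟨j, rfl⟩
      exact ⟨Submodule.subset_span ⟨j, rfl⟩, hint j⟩
    have h1 : w ∈ Submodule.span ℝ (latticeOf r) :=
      Submodule.span_mono hrange hwspanr
    have h2 : projPerpL v w ∈ Submodule.map (projPerpL v) (Submodule.span ℝ (latticeOf r)) :=
      Submodule.mem_map_of_mem h1
    rw [Submodule.map_span] at h2
    rw [← hPw]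
    exact h2
  · rintro y ⟨x, hx, rfl⟩
    rw [dot_projPerp_left v x w hriw]
    exact hmem.2 x hx


end ICRPaper
end
end
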